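/- arXiv:0808.2197 — 5 statements merged into one kernel-verified Lean document; each statement's English description precedes it below -/
import Mathlib

section
/- If a flow ψ on a closed Riemannian manifold P has a periodic orbit and possesses a generalized symmetry R with |ρ_ψ(R)| ≠ 1, then ψ has an equilibrium point (a zero of its generating vector field). -/
open Manifold Filter Topology

/-! A symmetry `R` with `ρ(R) = μ` maps a periodic orbit of period `T` to one of period `μ T`;
replacing `R` by `R⁻¹` if necessary, `|μ| < 1`, so iterating `R` on the given periodic point yields
periodic points whose periods tend to zero. By compactness they accumulate at some `q`. Every time
`t` differs from a multiple of the `k`-th period by at most that period, so `ψ t q` and `q` are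
limits of the same net. Limits are unique inside a chart (the manifold need not be Hausdorff), so
`q` is fixed for small times and the generating vector field vanishes at `q`. -/

namespace OpenPartialHomeomorph

theorem eq_of_tendsto_nhds {X H ι : Type*} [TopologicalSpace X] [TopologicalSpace H] [T2Space H]
    (e : OpenPartialHomeomorph X H) {l : Filter ι} [l.NeBot] {f : ι → X} {x y : X}
    (hx : x ∈ e.source) (hy : y ∈ e.source) (hfx : Tendsto f l (𝓝 x))
    (hfy : Tendsto f l (𝓝 y)) : x = y :=
  e.injOn hx hy <| tendsto_nhds_unique ((e.continuousAt hx).tendsto.comp hfx)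
    ((e.continuousAt hy).tendsto.comp hfy)

end OpenPartialHomeomorph

namespace Flow

section Periods

variable {τ α : Type*} [TopologicalSpace τ] [AddGroup τ] [TopologicalSpace α]

def periods (ϕ : Flow τ α) (x : α) : AddSubgroup τ where
  carrier := {t | ϕ t x = x}
  add_mem' {s t} (hs : ϕ s x = x) (ht : ϕ t x = x) := show ϕ (s + t) x = x by
    rw [ϕ.map_add, ht, hs]
  zero_mem' := ϕ.map_zero_apply x
  neg_mem' {t} (ht : ϕ t x = x) := show ϕ (-t) x = x by
    conv_rhs => rw [← ϕ.map_zero_apply x, ← neg_add_cancel t, ϕ.map_add, ht]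

theorem mem_periods {ϕ : Flow τ α} {x : α} {t : τ} : t ∈ ϕ.periods x ↔ ϕ t x = x := Iff.rfl

end Periods

variable {α : Type*} [TopologicalSpace α]

theorem tendsto_apply_of_periods_tendsto_zero (ϕ : Flow ℝ α) {ι : Type*} {l : Filter ι}
    {p : ι → α} {q : α} {T : ι → ℝ} (hT : ∀ i, T i ∈ ϕ.periods (p i)) (hT0 : ∀ i, T i ≠ 0)
    (hTlim : Tendsto T l (𝓝 0)) (hp : Tendsto p l (𝓝 q)) (t : ℝ) :
    Tendsto (fun i => ϕ t (p i)) l (𝓝 q) := by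
  set r : ι → ℝ := fun i => Int.fract (t / T i) * T i
  have hr : Tendsto r l (𝓝 0) := by
    refine squeeze_zero_norm (fun i => ?_) (by simpa using hTlim.norm)
    rw [norm_mul, Real.norm_eq_abs, Int.abs_fract]
    exact mul_le_of_le_one_left (norm_nonneg _) (Int.fract_lt_one _).le
  have hshift : ∀ i, ϕ t (p i) = ϕ (r i) (p i) := by
    intro i
    have hmul : t - r i = ⌊t / T i⌋ • T i := by
      simp only [r, Int.fract, zsmul_eq_mul]
      field_simp [hT0 i]
      ring
    have hper : t - r i ∈ ϕ.periods (p i) := hmul ▸ zsmul_mem (hT i) _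
    rw [← add_sub_cancel (r i) t, ϕ.map_add, mem_periods.1 hper]
  simpa [hshift, ϕ.map_zero_apply, Function.comp_def] using
    (ϕ.cont'.tendsto (0, q)).comp (hr.prodMk_nhds hp)

theorem exists_eventually_fixed_of_periods_tendsto_zero {H M : Type*} [TopologicalSpace H]
    [T2Space H] [TopologicalSpace M] [ChartedSpace H M] [CompactSpace M] (ϕ : Flow ℝ M)
    {p : ℕ → M} {T : ℕ → ℝ} (hT : ∀ k, T k ∈ ϕ.periods (p k)) (hT0 : ∀ k, T k ≠ 0)
    (hTlim : Tendsto T atTop (𝓝 0)) : ∃ q, ∀ᶠ t in 𝓝 0, ϕ t q = q := by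
  set 𝒰 : Ultrafilter ℕ := Ultrafilter.of atTop
  obtain ⟨q, -, hq⟩ := isCompact_univ.ultrafilter_le_nhds (𝒰.map p) (by simp)
  have hpq : Tendsto p 𝒰 (𝓝 q) := hq
  refine ⟨q, ?_⟩
  have horbit : Tendsto (fun t => ϕ t q) (𝓝 0) (𝓝 q) := by
    simpa [ϕ.map_zero_apply] using
      (ϕ.continuous continuous_id continuous_const (f := fun _ => q)).tendsto (0 : ℝ)
  filter_upwards [horbit ((chartAt H q).open_source.mem_nhds (mem_chart_source H q))] with t ht
  exact (chartAt H q).eq_of_tendsto_nhds ht (mem_chart_source H q)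
    (((ϕ.continuous_toFun t).tendsto q).comp hpq)
    (ϕ.tendsto_apply_of_periods_tendsto_zero hT hT0 (hTlim.mono_left (Ultrafilter.of_le _)) hpq t)

/-- In the paper's notation, `ρ_ϕ(R) = μ`: the integrated form of `R_* X = μ X`. -/
def IsGeneralizedSymmetry (ϕ : Flow ℝ α) (R : α → α) (μ : ℝ) : Prop :=
  ∀ t x, R (ϕ t x) = ϕ (μ * t) (R x)

namespace IsGeneralizedSymmetry

variable {ϕ : Flow ℝ α} {μ : ℝ}

theorem symm {R : α ≃ α} (h : ϕ.IsGeneralizedSymmetry R μ) (hμ : μ ≠ 0) :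
    ϕ.IsGeneralizedSymmetry R.symm μ⁻¹ := fun t x =>
  R.injective <| by rw [h, mul_inv_cancel_left₀ hμ, R.apply_symm_apply, R.apply_symm_apply]

theorem mul_mem_periods {R : α → α} (h : ϕ.IsGeneralizedSymmetry R μ) {x : α} {T : ℝ}
    (hT : T ∈ ϕ.periods x) : μ * T ∈ ϕ.periods (R x) := by
  rw [mem_periods, ← h, mem_periods.1 hT]

theorem pow_mul_mem_periods {R : α → α} (h : ϕ.IsGeneralizedSymmetry R μ) {x : α} {T : ℝ}
    (hT : T ∈ ϕ.periods x) (k : ℕ) : μ ^ k * T ∈ ϕ.periods (R^[k] x) := by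
  induction k with
  | zero => simpa using hT
  | succ k ih =>
    rw [Function.iterate_succ_apply', pow_succ', mul_assoc]
    exact h.mul_mem_periods ih

theorem exists_contracting {R : α ≃ α} (h : ϕ.IsGeneralizedSymmetry R μ) (hμ0 : μ ≠ 0)
    (hμ1 : |μ| ≠ 1) : ∃ (S : α → α) (ν : ℝ), ν ≠ 0 ∧ |ν| < 1 ∧ ϕ.IsGeneralizedSymmetry S ν := by
  rcases hμ1.lt_or_gt with hlt | hgt
  · exact ⟨R, μ, hμ0, hlt, h⟩
  · exact ⟨R.symm, μ⁻¹, inv_ne_zero hμ0, by rwa [abs_inv, inv_lt_one₀ (one_pos.trans hgt)],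
      h.symm hμ0⟩

theorem exists_periods_tendsto_zero {R : α ≃ α} (h : ϕ.IsGeneralizedSymmetry R μ) (hμ0 : μ ≠ 0)
    (hμ1 : |μ| ≠ 1) {x : α} {T₀ : ℝ} (hT₀ : T₀ ≠ 0) (hx : T₀ ∈ ϕ.periods x) :
    ∃ (p : ℕ → α) (T : ℕ → ℝ), (∀ k, T k ∈ ϕ.periods (p k)) ∧ (∀ k, T k ≠ 0) ∧
      Tendsto T atTop (𝓝 0) := by
  obtain ⟨S, ν, hν0, hν1, hS⟩ := h.exists_contracting hμ0 hμ1
  refine ⟨fun k => S^[k] x, fun k => ν ^ k * T₀, hS.pow_mul_mem_periods hx,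
    fun k => mul_ne_zero (pow_ne_zero k hν0) hT₀, ?_⟩
  simpa using (tendsto_pow_atTop_nhds_zero_of_abs_lt_one hν1).mul_const T₀

end IsGeneralizedSymmetry

end Flow

theorem periodic_orbit_and_nontrivial_symmetry_implies_equilibrium_general
    {n : ℕ} {P : Type*} [TopologicalSpace P] [CompactSpace P]
    [ChartedSpace (EuclideanSpace ℝ (Fin n)) P]
    (ψ : ℝ → P → P)
    (hψ0 : ψ 0 = id)
    (hψadd : ∀ s t : ℝ, ψ (s + t) = ψ s ∘ ψ t)
    (hψsmooth : ContMDiff (𝓘(ℝ, ℝ).prod (𝓡 n)) (𝓡 n) (⊤ : ℕ∞) (fun q : ℝ × P => ψ q.1 q.2))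
    (X : P → EuclideanSpace ℝ (Fin n))
    (hX : ∀ p : P, mfderiv 𝓘(ℝ, ℝ) (𝓡 n) (fun t : ℝ => ψ t p) 0 (1 : ℝ) = X p)
    (R : Diffeomorph (𝓡 n) (𝓡 n) P P (⊤ : ℕ∞)) (μ : ℝ) (hμ0 : μ ≠ 0) (hμ1 : |μ| ≠ 1)
    (hR : ∀ (t : ℝ) (p : P), R (ψ t p) = ψ (μ * t) (R p))
    -- ψ has a periodic orbit (through a non-equilibrium point)
    (p₀ : P) (T₀ : ℝ) (hT₀ : 0 < T₀) (hper : ψ T₀ p₀ = p₀) :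
    ∃ p : P, X p = 0 := by
  let ϕ : Flow ℝ P :=
    { toFun := ψ, cont' := hψsmooth.continuous, map_add' := fun s t x => congrFun (hψadd s t) x,
      map_zero' := congrFun hψ0 }
  have hRϕ : ϕ.IsGeneralizedSymmetry R.toEquiv μ := hR
  obtain ⟨p, T, hT, hT0, hTlim⟩ := hRϕ.exists_periods_tendsto_zero hμ0 hμ1 hT₀.ne' hper
  obtain ⟨q, hq⟩ := ϕ.exists_eventually_fixed_of_periods_tendsto_zero
    (H := EuclideanSpace ℝ (Fin n)) hT hT0 hTlim
  have hconst : (fun t => ψ t q) =ᶠ[𝓝 0] fun _ => q := hq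
  refine ⟨q, ?_⟩
  rw [← hX q, hconst.mfderiv_eq, mfderiv_const]
  rfl

/-- If a flow `ψ` on a closed Riemannian manifold has a (non-stationary)
periodic orbit and possesses a generalized symmetry `R` with multiplier `μ`, `|μ| ∉ {0, 1}`,
then `ψ` has an equilibrium point, i.e. a zero of its generating vector field. -/
theorem periodic_orbit_and_nontrivial_symmetry_implies_equilibrium
    {n : ℕ} {P : Type*} [TopologicalSpace P] [CompactSpace P]
    [ChartedSpace (EuclideanSpace ℝ (Fin n)) P]
    [IsManifold (𝓡 n) (⊤ : ℕ∞) P]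
    (ψ : ℝ → P → P)
    (hψ0 : ψ 0 = id)
    (hψadd : ∀ s t : ℝ, ψ (s + t) = ψ s ∘ ψ t)
    (hψsmooth : ContMDiff (𝓘(ℝ, ℝ).prod (𝓡 n)) (𝓡 n) (⊤ : ℕ∞) (fun q : ℝ × P => ψ q.1 q.2))
    (X : P → EuclideanSpace ℝ (Fin n))
    (hX : ∀ p : P, mfderiv 𝓘(ℝ, ℝ) (𝓡 n) (fun t : ℝ => ψ t p) 0 (1 : ℝ) = X p)
    (R : Diffeomorph (𝓡 n) (𝓡 n) P P (⊤ : ℕ∞)) (μ : ℝ) (hμ0 : μ ≠ 0) (hμ1 : |μ| ≠ 1)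
    (hR : ∀ (t : ℝ) (p : P), R (ψ t p) = ψ (μ * t) (R p))
    -- ψ has a periodic orbit (through a non-equilibrium point)
    (p₀ : P) (T₀ : ℝ) (hT₀ : 0 < T₀) (hper : ψ T₀ p₀ = p₀)
    (hnonstat : ∃ t : ℝ, ψ t p₀ ≠ p₀) :
    ∃ p : P, X p = 0 :=
  periodic_orbit_and_nontrivial_symmetry_implies_equilibrium_general ψ hψ0 hψadd hψsmooth X hX R μ
    hμ0 hμ1 hR p₀ T₀ hT₀ hper
end

section
/- Let ψ be an equilibrium-free flow on a closed Riemannian manifold P. For each generalized symmetry R of ψ, the one-dimensional distribution E(p) = Span(X_ψ(p)) is invariant under the derivative of R, and the Lyapunov exponent of R at any point p in the direction X_ψ(p) equals log|ρ_ψ(R)|. -/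
/-!
Since `T R` maps `X p` to `μ • X (R p)`, the chain rule gives `T_p Rᵐ (X p) = μᵐ • X (Rᵐ p)`,
so `(1/m) log ‖T_p Rᵐ (X p)‖ = log |μ| + (1/m) log ‖X (Rᵐ p)‖`. On the compact manifold the
nowhere-vanishing continuous field `X` has `log ‖X‖` bounded, so the last term tends to `0`.
-/

open Manifold

/-- The Lyapunov exponent of a map `R` at `p` in direction `v`:
`χ_R(p,v) = limsup_{m→∞} (1/m) log ‖T_p R^m (v)‖`. -/
noncomputable def lyapunovExponent
    {n : ℕ} {P : Type*} [TopologicalSpace P]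
    [ChartedSpace (EuclideanSpace ℝ (Fin n)) P]
    (R : P → P) (p : P) (v : EuclideanSpace ℝ (Fin n)) : ℝ :=
  Filter.limsup
    (fun m : ℕ => Real.log ‖(show EuclideanSpace ℝ (Fin n) from mfderiv (𝓡 n) (𝓡 n) (R^[m]) p v)‖ / m) Filter.atTop

open Filter Topology

theorem Submodule.apply_mem_span_singleton_of_apply_eq_smul {R M N F : Type*} [CommSemiring R]
    [AddCommMonoid M] [AddCommMonoid N] [Module R M] [Module R N] [FunLike F M N]
    [LinearMapClass F R M N] {L : F} {x v : M} {y : N} {c : R} (hx : L x = c • y)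
    (hv : v ∈ span R {x}) : L v ∈ span R {y} := by
  obtain ⟨a, rfl⟩ := mem_span_singleton.mp hv
  rw [map_smul, hx, smul_smul]
  exact smul_mem _ _ (mem_span_singleton_self y)

section Iterate

variable {𝕜 E H M : Type*} [NontriviallyNormedField 𝕜] [NormedAddCommGroup E] [NormedSpace 𝕜 E]
  [TopologicalSpace H] {I : ModelWithCorners 𝕜 E H} [TopologicalSpace M] [ChartedSpace H M]
  {f : M → M}

theorem MDifferentiable.iterate (hf : MDifferentiable I I f) (k : ℕ) :
    MDifferentiable I I f^[k] := by
  induction k with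
  | zero => simpa using mdifferentiable_id
  | succ k ih => simpa using ih.comp hf

theorem mfderiv_iterate_apply_eq_pow_smul (hf : MDifferentiable I I f) {V : M → E} {μ : 𝕜}
    (hV : ∀ p, mfderiv I I f p (V p) = μ • V (f p)) (k : ℕ) (p : M) :
    mfderiv I I f^[k] p (V p) = μ ^ k • V (f^[k] p) := by
  induction k generalizing p with
  | zero => simp only [Function.iterate_zero, mfderiv_id, pow_zero, one_smul]; rfl
  | succ k ih =>
    rw [Function.iterate_succ, mfderiv_comp p (hf.iterate k (f p)) (hf p)]
    change mfderiv I I f^[k] (f p) (mfderiv I I f p (V p)) = _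
    rw [hV]
    refine ((mfderiv I I f^[k] (f p)).map_smul μ (V (f p))).trans ?_
    rw [ih]
    change (μ • μ ^ k • V (f^[k] (f p)) : E) = μ ^ (k + 1) • V (f^[k] (f p))
    rw [smul_smul, pow_succ']

end Iterate

theorem tendsto_comp_div_natCast_atTop_nhds_zero {P : Type*} [TopologicalSpace P]
    [CompactSpace P] {g : P → ℝ} (hg : Continuous g) (x : ℕ → P) :
    Tendsto (fun m : ℕ => g (x m) / m) atTop (𝓝 0) := by
  obtain ⟨b, hb⟩ := (isCompact_range hg).bddBelow
  obtain ⟨B, hB⟩ := (isCompact_range hg).bddAbove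
  exact tendsto_bdd_div_atTop_nhds_zero (.of_forall fun m => hb ⟨x m, rfl⟩)
    (.of_forall fun m => hB ⟨x m, rfl⟩) tendsto_natCast_atTop_atTop

theorem lyapunovExponent_eq_log_abs_of_mfderiv_iterate_eq_pow_smul {n : ℕ} {P : Type*}
    [TopologicalSpace P] [ChartedSpace (EuclideanSpace ℝ (Fin n)) P] {R : P → P} {p : P}
    {v : EuclideanSpace ℝ (Fin n)} {μ : ℝ} (hμ : μ ≠ 0) {w : ℕ → EuclideanSpace ℝ (Fin n)}
    (hw0 : ∀ m, w m ≠ 0) (hR : ∀ m, mfderiv (𝓡 n) (𝓡 n) R^[m] p v = μ ^ m • w m)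
    (hw : Tendsto (fun m : ℕ => Real.log ‖w m‖ / m) atTop (𝓝 0)) :
    lyapunovExponent R p v = Real.log |μ| := by
  have hsplit : ∀ᶠ m : ℕ in atTop, Real.log ‖(show EuclideanSpace ℝ (Fin n) from
      mfderiv (𝓡 n) (𝓡 n) R^[m] p v)‖ / m = Real.log |μ| + Real.log ‖w m‖ / m := by
    filter_upwards [eventually_ne_atTop 0] with m hm
    rw [hR, norm_smul, norm_pow, Real.norm_eq_abs,
      Real.log_mul (pow_ne_zero m (abs_ne_zero.mpr hμ)) (norm_ne_zero_iff.mpr (hw0 m)),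
      Real.log_pow]
    field_simp
  refine Tendsto.limsup_eq ((tendsto_congr' hsplit).mpr ?_)
  simpa using hw.const_add (Real.log |μ|)

theorem lyapunov_exponent_of_symmetry_general
    {n : ℕ} {P : Type*} [TopologicalSpace P] [CompactSpace P]
    [ChartedSpace (EuclideanSpace ℝ (Fin n)) P]
    (X : P → EuclideanSpace ℝ (Fin n))
    (hXcont : Continuous X)
    (hXne : ∀ p : P, X p ≠ 0)  -- ψ is equilibrium-free
    (R : Diffeomorph (𝓡 n) (𝓡 n) P P (⊤ : ℕ∞)) (μ : ℝ) (hμ : μ ≠ 0)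
    (hsym : ∀ p : P, mfderiv (𝓡 n) (𝓡 n) (⇑R) p (X p) = μ • X (R p)) :
    -- the one-dimensional distribution spanned by X is invariant under T R
    (∀ (p : P) (v : EuclideanSpace ℝ (Fin n)),
        v ∈ Submodule.span ℝ {X p} →
        mfderiv (𝓡 n) (𝓡 n) (⇑R) p v ∈ Submodule.span ℝ {X (R p)}) ∧
    -- the Lyapunov exponent in the flow direction is log |μ| everywhere
    (∀ p : P, lyapunovExponent (⇑R) p (X p) = Real.log |μ|) := by
  refine ⟨fun p v => Submodule.apply_mem_span_singleton_of_apply_eq_smul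
    (L := (mfderiv (𝓡 n) (𝓡 n) R p : EuclideanSpace ℝ (Fin n) →L[ℝ] EuclideanSpace ℝ (Fin n)))
    (hsym p), fun p => ?_⟩
  have hlogX : Continuous fun q => Real.log ‖X q‖ :=
    hXcont.norm.log fun q => norm_ne_zero_iff.mpr (hXne q)
  exact lyapunovExponent_eq_log_abs_of_mfderiv_iterate_eq_pow_smul hμ (fun m => hXne _)
    (mfderiv_iterate_apply_eq_pow_smul (R.mdifferentiable (by simp)) hsym · p)
    (tendsto_comp_div_natCast_atTop_nhds_zero hlogX _)

/-- For an equilibrium-free flow `ψ` on a closed Riemannian manifold and any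
generalized symmetry `R` of `ψ` with multiplier `μ`, the line field `E(p) = span(X_ψ(p))` is
invariant under the derivative of `R`, and the Lyapunov exponent of `R` at every point `p` in
the direction `X_ψ(p)` equals `log |μ|`. -/
theorem lyapunov_exponent_of_symmetry
    {n : ℕ} {P : Type*} [TopologicalSpace P] [CompactSpace P]
    [ChartedSpace (EuclideanSpace ℝ (Fin n)) P]
    [IsManifold (𝓡 n) (⊤ : ℕ∞) P]
    (ψ : ℝ → P → P)
    (hψ0 : ψ 0 = id)
    (hψadd : ∀ s t : ℝ, ψ (s + t) = ψ s ∘ ψ t)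
    (hψsmooth : ContMDiff (𝓘(ℝ, ℝ).prod (𝓡 n)) (𝓡 n) (⊤ : ℕ∞) (fun q : ℝ × P => ψ q.1 q.2))
    (X : P → EuclideanSpace ℝ (Fin n))
    (hX : ∀ p : P, mfderiv 𝓘(ℝ, ℝ) (𝓡 n) (fun t : ℝ => ψ t p) 0 (1 : ℝ) = X p)
    (hXcont : Continuous X)
    (hXne : ∀ p : P, X p ≠ 0)  -- ψ is equilibrium-free
    (R : Diffeomorph (𝓡 n) (𝓡 n) P P (⊤ : ℕ∞)) (μ : ℝ) (hμ : μ ≠ 0)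
    (hsym : ∀ p : P, mfderiv (𝓡 n) (𝓡 n) (⇑R) p (X p) = μ • X (R p)) :
    -- the one-dimensional distribution spanned by X is invariant under T R
    (∀ (p : P) (v : EuclideanSpace ℝ (Fin n)),
        v ∈ Submodule.span ℝ {X p} →
        mfderiv (𝓡 n) (𝓡 n) (⇑R) p v ∈ Submodule.span ℝ {X (R p)}) ∧
    -- the Lyapunov exponent in the flow direction is log |μ| everywhere
    (∀ p : P, lyapunovExponent (⇑R) p (X p) = Real.log |μ|) :=
  lyapunov_exponent_of_symmetry_general X hXcont hXne R μ hμ hsym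
end

section
/- Let ψ be the flow on the n-torus generated by the constant vector field with components (1,1,…,1,1,√2), and let R be the toral automorphism induced by the integer matrix B which has 1's on the diagonal, 1's in the last column of rows 1 through n-1, entry 2 in position (n,n-1), and 1 in position (n,n), all other entries being 0 (so the last row of B is (0,…,0,2,1)). Then R is a generalized symmetry of ψ with multiplier 1+√2. -/
/-- On `𝕋^n = ℝ^n/ℤ^n` (`n ≥ 2`), let `ψ` be the flow generated by the
constant vector field `X = (1, …, 1, √2)`, and let `R` be the toral map induced by the integer
matrix `B` with `b_{ii} = 1`, `b_{i,n} = 1` for `1 ≤ i ≤ n-1`, `b_{n,n-1} = 2`, `b_{n,n} = 1`,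
and zeros elsewhere. Then `B · X = (1 + √2) · X`, and consequently `R` is a generalized
symmetry of `ψ` with multiplier `1 + √2`:  `R ∘ ψ_t = ψ_{(1+√2) t} ∘ R`. -/
theorem partially_hyperbolic_symmetry_example
    (n : ℕ) (hn : 2 ≤ n)
    (X : Fin n → ℝ)
    (hX : ∀ i : Fin n, X i = if (i : ℕ) = n - 1 then Real.sqrt 2 else 1)
    (B : Matrix (Fin n) (Fin n) ℤ)
    (hB : ∀ i j : Fin n, B i j =
      (if i = j then 1 else 0) +
      (if (j : ℕ) = n - 1 ∧ (i : ℕ) ≠ n - 1 then 1 else 0) +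
      (if (i : ℕ) = n - 1 ∧ (j : ℕ) = n - 2 then 2 else 0))
    -- the flow ψ on 𝕋^n generated by X and the toral map R induced by B
    (ψ : ℝ → (Fin n → AddCircle (1 : ℝ)) → (Fin n → AddCircle (1 : ℝ)))
    (hψ : ∀ (t : ℝ) (θ : Fin n → AddCircle (1 : ℝ)),
      ψ t θ = fun i => θ i + (↑(t * X i) : AddCircle (1 : ℝ)))
    (R : (Fin n → AddCircle (1 : ℝ)) → (Fin n → AddCircle (1 : ℝ)))
    (hR : ∀ (θ : Fin n → AddCircle (1 : ℝ)), R θ = fun i => ∑ j : Fin n, B i j • θ j) :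
    (B.map (Int.cast : ℤ → ℝ)).mulVec X = (1 + Real.sqrt 2) • X ∧
      ∀ (t : ℝ) (θ : Fin n → AddCircle (1 : ℝ)),
        R (ψ t θ) = ψ ((1 + Real.sqrt 2) * t) (R θ) := by
  have hn1 : n - 1 < n := by omega
  have hn2 : n - 2 < n := by omega
  have hne : n - 1 ≠ n - 2 := by omega
  have s2 : Real.sqrt 2 * Real.sqrt 2 = 2 := Real.mul_self_sqrt (by norm_num)
  have key : ∀ i : Fin n, ∑ j : Fin n, (B i j : ℝ) * X j = (1 + Real.sqrt 2) * X i := by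
    intro i
    by_cases hi : (i : ℕ) = n - 1
    · have this1 : ∀ j : Fin n, (B i j : ℝ) * X j =
          (if j = i then Real.sqrt 2 else 0) +
          (if j = (⟨n - 2, hn2⟩ : Fin n) then 2 else 0) := by
        intro j
        rw [hB, hX]
        have e1 : (i = j) = ((j : ℕ) = n - 1) :=
          propext ⟨fun h => h ▸ hi, fun h => Fin.ext (hi.trans h.symm)⟩
        have e2 : (j = i) = ((j : ℕ) = n - 1) :=
          propext ⟨fun h => h ▸ hi, fun h => Fin.ext (h.trans hi.symm)⟩
        have e3 : (j = (⟨n - 2, hn2⟩ : Fin n)) = ((j : ℕ) = n - 2) :=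
          propext ⟨fun h => h ▸ rfl, fun h => Fin.ext h⟩
        simp only [e1, e2, e3, hi, ne_eq, not_true_eq_false, and_false, if_false,
          true_and, add_zero]
        by_cases h2 : (j : ℕ) = n - 2
        · have h1 : ¬ (j : ℕ) = n - 1 := by omega
          simp [h1, h2, hne, hne.symm]
        · by_cases h1 : (j : ℕ) = n - 1
          · simp [h1, h2, hne, hne.symm]
          · simp [h1, h2, hne, hne.symm]
      rw [Finset.sum_congr rfl fun j _ => this1 j, Finset.sum_add_distrib,
        Finset.sum_ite_eq' Finset.univ i, Finset.sum_ite_eq' Finset.univ (⟨n - 2, hn2⟩ : Fin n)]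
      simp only [Finset.mem_univ, if_true]
      rw [hX]
      simp only [hi, if_true]
      nlinarith [s2]
    · have this1 : ∀ j : Fin n, (B i j : ℝ) * X j =
          (if j = i then 1 else 0) +
          (if j = (⟨n - 1, hn1⟩ : Fin n) then Real.sqrt 2 else 0) := by
        intro j
        rw [hB, hX]
        have e3 : (j = (⟨n - 1, hn1⟩ : Fin n)) = ((j : ℕ) = n - 1) :=
          propext ⟨fun h => h ▸ rfl, fun h => Fin.ext h⟩
        simp only [e3, hi, ne_eq, not_false_iff, and_true, false_and, if_false, add_zero]
        rcases eq_or_ne j i with rfl | hji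
        · have h1 : ¬ (j : ℕ) = n - 1 := hi
          simp [h1]
        · have hji' : i ≠ j := fun h => hji h.symm
          by_cases h1 : (j : ℕ) = n - 1
          · simp [hji, hji', h1]
          · simp [hji, hji', h1]
      rw [Finset.sum_congr rfl fun j _ => this1 j, Finset.sum_add_distrib,
        Finset.sum_ite_eq' Finset.univ i, Finset.sum_ite_eq' Finset.univ (⟨n - 1, hn1⟩ : Fin n)]
      simp only [Finset.mem_univ, if_true]
      rw [hX]
      simp only [hi, if_false]
      ring
  constructor
  · funext i
    simp only [Matrix.mulVec, dotProduct, Matrix.map_apply, Pi.smul_apply, smul_eq_mul]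
    exact key i
  · intro t θ
    funext i
    rw [hR, hψ, hψ, hR]
    simp only
    have step : ∀ j : Fin n, B i j • (θ j + (↑(t * X j) : AddCircle (1 : ℝ)))
        = B i j • θ j + (↑((B i j : ℝ) * (t * X j)) : AddCircle (1 : ℝ)) := by
      intro j
      rw [smul_add]
      congr 1
      rw [← AddCircle.coe_zsmul]
      norm_num [zsmul_eq_mul]
    rw [Finset.sum_congr rfl fun j _ => step j, Finset.sum_add_distrib]
    congr 1
    have hmap : (↑(∑ j : Fin n, (B i j : ℝ) * (t * X j)) : AddCircle (1 : ℝ))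
        = ∑ j : Fin n, (↑((B i j : ℝ) * (t * X j)) : AddCircle (1 : ℝ)) :=
      map_sum (QuotientAddGroup.mk' (AddSubgroup.zmultiples (1 : ℝ))) _ _
    rw [← hmap]
    congr 1
    have : ∑ j : Fin n, (B i j : ℝ) * (t * X j) = t * ∑ j : Fin n, (B i j : ℝ) * X j := by
      rw [Finset.mul_sum]; exact Finset.sum_congr rfl fun j _ => by ring
    rw [this, key i]; ring
end

section
/- The matrix B ∈ GL(n,ℤ) defined by b_{ii}=1 for all i, b_{i,n}=1 for 1 ≤ i ≤ n-1, b_{n,n-1}=2, b_{n,n}=1, and zeros elsewhere, has eigenvalue 1 with multiplicity n-2, and two further eigenvalues 1+√2 and 1-√2, each simple. -/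
/-!
`B - 1 = u e_nᵀ + 2 e_n e_{n-1}ᵀ`, with `u` the indicator of the first `n - 1` coordinates, is a
product `UV` with `U` of size `n × 2`. By Sylvester's identity `X ^ 2 χ(UV) = X ^ n χ(VU)`, its
characteristic polynomial is `X ^ (n - 2)` times that of the `2 × 2` matrix of pairings
`!![0, 2; 1, 0]`, i.e. `X ^ (n - 2) (X ^ 2 - 2)`. Shifting by `1` turns the roots `0, ±√2` into
`1, 1 ± √2`.
-/

open Polynomial Matrix

namespace Matrix

variable {n R : Type*} [Fintype n] [DecidableEq n] [CommRing R]

theorem charpoly_vecMulVec_add_vecMulVec (u x w y : n → R) (hn : 2 ≤ Fintype.card n) :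
    (vecMulVec u x + vecMulVec w y).charpoly =
      X ^ (Fintype.card n - 2) * !![x ⬝ᵥ u, x ⬝ᵥ w; y ⬝ᵥ u, y ⬝ᵥ w].charpoly := by
  have hUV : vecMulVec u x + vecMulVec w y = (of ![u, w])ᵀ * of ![x, y] := by
    ext i j
    simp [mul_apply, Fin.sum_univ_two, vecMulVec_apply]
  have hVU : of ![x, y] * (of ![u, w])ᵀ = !![x ⬝ᵥ u, x ⬝ᵥ w; y ⬝ᵥ u, y ⬝ᵥ w] := by
    ext k l
    fin_cases k <;> fin_cases l <;> rfl
  rw [hUV, charpoly_mul_comm_of_le _ _ (by simpa using hn), hVU, Fintype.card_fin]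

theorem rootMultiplicity_charpoly_sub_scalar (M : Matrix n n R) (μ t : R) :
    (M - scalar n μ).charpoly.rootMultiplicity t = M.charpoly.rootMultiplicity (t + μ) := by
  rw [charpoly_sub_scalar, rootMultiplicity_eq_rootMultiplicity, comp_assoc,
    rootMultiplicity_eq_rootMultiplicity (p := M.charpoly)]
  simp [add_assoc]

end Matrix

namespace Polynomial

variable {R : Type*} [CommRing R]

theorem rootMultiplicity_zero_X_pow_mul {p : R[X]} (hp : p.eval 0 ≠ 0) (k : ℕ) :
    (X ^ k * p).rootMultiplicity 0 = k := by
  have := rootMultiplicity_mul_X_sub_C_pow (a := (0 : R)) (n := k)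
    (fun h : p = 0 ↦ hp (by simp [h]))
  rwa [rootMultiplicity_eq_zero hp, zero_add, map_zero, sub_zero, mul_comm] at this

theorem rootMultiplicity_X_pow_mul_X_sq_sub_C [IsDomain R] [NeZero (2 : R)] {b c : R} (hb : b ≠ 0)
    (hbc : b ^ 2 = c) (k : ℕ) : (X ^ k * (X ^ 2 - C c)).rootMultiplicity b = 1 := by
  have hfac : X ^ 2 - C c = (X - C b) * (X - C (-b)) := by
    rw [← hbc, C_pow, map_neg]; ring
  have hneg : ¬(X - C (-b)).IsRoot b := by
    intro h
    have h2b : (2 : R) * b = 0 := by simpa [two_mul] using h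
    exact hb ((mul_eq_zero.1 h2b).resolve_left two_ne_zero)
  have hXk : ¬(X ^ k : R[X]).IsRoot b := by simpa using pow_ne_zero k hb
  have hne : X ^ k * ((X - C b) * (X - C (-b))) ≠ 0 :=
    mul_ne_zero (pow_ne_zero k X_ne_zero)
      (mul_ne_zero (X_sub_C_ne_zero b) (X_sub_C_ne_zero _))
  rw [hfac, rootMultiplicity_mul hne, rootMultiplicity_mul (right_ne_zero_of_mul hne),
    rootMultiplicity_X_sub_C_self, rootMultiplicity_eq_zero hneg, rootMultiplicity_eq_zero hXk]

end Polynomial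

/-- For `n ≥ 3`, the integer matrix `B` with `b_{ii} = 1`, `b_{i,n} = 1` for
`1 ≤ i ≤ n-1`, `b_{n,n-1} = 2`, `b_{n,n} = 1`, and zeros elsewhere, has (over `ℝ`) the
eigenvalue `1` with multiplicity `n - 2`, and two further simple eigenvalues `1 + √2` and
`1 - √2`. -/
theorem eigenvalues_of_example_matrix
    (n : ℕ) (hn : 3 ≤ n)
    (B : Matrix (Fin n) (Fin n) ℝ)
    (hB : ∀ i j : Fin n, B i j =
      (if i = j then 1 else 0) +
      (if (j : ℕ) = n - 1 ∧ (i : ℕ) ≠ n - 1 then 1 else 0) +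
      (if (i : ℕ) = n - 1 ∧ (j : ℕ) = n - 2 then 2 else 0)) :
    (B.charpoly.rootMultiplicity 1 = n - 2) ∧
      (B.charpoly.rootMultiplicity (1 + Real.sqrt 2) = 1) ∧
      (B.charpoly.rootMultiplicity (1 - Real.sqrt 2) = 1) := by
  set last : Fin n := ⟨n - 1, by omega⟩
  set penult : Fin n := ⟨n - 2, by omega⟩
  have hpenult : penult ≠ last := by simp [penult, last, Fin.ext_iff]; omega
  set u : Fin n → ℝ := fun i ↦ if i = last then 0 else 1
  have hrank_two : B - scalar (Fin n) 1 =
      vecMulVec u (Pi.single last 1) + vecMulVec (Pi.single last 2) (Pi.single penult 1) := by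
    ext i j
    simp only [Matrix.sub_apply, Matrix.add_apply, hB, vecMulVec_apply, Pi.single_apply, u, map_one,
      one_apply, Fin.ext_iff, last, penult]
    split_ifs <;> first | omega | norm_num
  have hcharpoly : (B - scalar (Fin n) 1).charpoly = X ^ (n - 2) * (X ^ 2 - C 2) := by
    rw [hrank_two, charpoly_vecMulVec_add_vecMulVec _ _ _ _ (by simp; omega), charpoly_fin_two]
    simp [u, hpenult, trace_fin_two, det_fin_two]
    ring
  have hmult (t : ℝ) :
      B.charpoly.rootMultiplicity t =
        (X ^ (n - 2) * (X ^ 2 - C 2) : ℝ[X]).rootMultiplicity (t - 1) := by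
    rw [← hcharpoly, rootMultiplicity_charpoly_sub_scalar, sub_add_cancel]
  have hsqrt : Real.sqrt 2 ≠ 0 := by positivity
  refine ⟨?_, ?_, ?_⟩ <;> rw [hmult]
  · rw [sub_self, rootMultiplicity_zero_X_pow_mul (by norm_num)]
  · rw [add_sub_cancel_left, rootMultiplicity_X_pow_mul_X_sq_sub_C hsqrt (by simp)]
  · rw [sub_sub_cancel_left,
      rootMultiplicity_X_pow_mul_X_sq_sub_C (neg_ne_zero.2 hsqrt) (by simp)]
end

section
/- Suppose the components a_1,…,a_n of the constant vector field X_ψ on 𝕋^n satisfy k_1a_1 + ⋯ + k_l a_l = 0 with 1 ≤ l ≤ n−1 and all k_i ∈ ℤ∖{0}. Then the toral automorphism R induced by the matrix B ∈ GL(n,ℤ) that equals the identity except that its last row is (k_1,…,k_l,0,…,0,1) satisfies R_*X_ψ = X_ψ and R is not a translation. -/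
/-!
Write `B = 1 + e_p rᵀ`, where `p` is the last index and `r = (k₁, …, k_l, 0, …, 0)`.
Since `r_p = 0`, the matrix determinant lemma gives `det B = 1 + r_p = 1`, and
`B a = a + (r ⬝ a) e_p = a` by the relation `k₁ a₁ + ⋯ + k_l a_l = 0`. An integer matrix fixing `a`
commutes, as a toral endomorphism, with every translation by a multiple of `a`, hence with the flow.
Finally, the action of integer matrices on the torus is faithful (the circle has elements of every
finite order), so if `R` were a translation it would be the identity and `B = 1`, contradicting
`k₁ ≠ 0`.
-/

open Matrix

lemma AddCircle.exponent_eq_zero {𝕜 : Type*} [Field 𝕜] [LinearOrder 𝕜] [IsStrictOrderedRing 𝕜]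
    (p : 𝕜) [Fact (0 < p)] : AddMonoid.exponent (AddCircle p) = 0 := by
  rw [AddMonoid.exponent_eq_zero_iff_forall]
  intro k hk
  refine ⟨↑(p / (k + 1 : ℕ)), fun h => ?_⟩
  have := addOrderOf_le_of_nsmul_eq_zero hk h
  rw [AddCircle.addOrderOf_period_div (Nat.succ_pos k)] at this
  omega

namespace Matrix

variable {m n R : Type*} [Fintype n]

section IntAction

variable (G : Type*) [AddCommGroup G]

def intMulVecHom (M : Matrix m n ℤ) : (n → G) →+ (m → G) where
  toFun θ i := ∑ j, M i j • θ j
  map_zero' := by ext; simp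
  map_add' θ θ' := by ext; simp [smul_add, Finset.sum_add_distrib]

variable {G}

@[simp]
lemma intMulVecHom_apply (M : Matrix m n ℤ) (θ : n → G) (i : m) :
    M.intMulVecHom G θ i = ∑ j, M i j • θ j :=
  rfl

lemma intMulVecHom_comp {H : Type*} [AddCommGroup H] (f : G →+ H) (M : Matrix m n ℤ)
    (v : n → G) : M.intMulVecHom H (f ∘ v) = f ∘ M.intMulVecHom G v := by
  ext i
  simp [map_sum, map_zsmul]

lemma intMulVecHom_eq_mulVec [Ring R] (M : Matrix m n ℤ) (v : n → R) :
    M.intMulVecHom R v = M.map Int.cast *ᵥ v := by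
  ext i
  simp [mulVec, dotProduct, zsmul_eq_mul]

lemma intMulVecHom_add_comp_of_mulVec_eq [Ring R] (f : R →+ G) {M : Matrix n n ℤ} {v : n → R}
    (hv : M.map Int.cast *ᵥ v = v) (θ : n → G) :
    M.intMulVecHom G (θ + f ∘ v) = M.intMulVecHom G θ + f ∘ v := by
  rw [map_add, intMulVecHom_comp, intMulVecHom_eq_mulVec, hv]

lemma eq_one_of_forall_intMulVecHom_eq [DecidableEq n] (hG : AddMonoid.exponent G = 0)
    {M : Matrix n n ℤ} (hM : ∀ θ : n → G, M.intMulVecHom G θ = θ) : M = 1 := by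
  ext i j
  have hsmul : ∀ g : G, M i j • g = (1 : Matrix n n ℤ) i j • g := by
    intro g
    have := congrFun (hM (Pi.single j g)) i
    simp only [intMulVecHom_apply, Pi.single_apply, smul_ite, smul_zero,
      Finset.sum_ite_eq', Finset.mem_univ, if_true] at this
    rw [this, one_apply]
    split_ifs <;> simp
  simpa [hG, sub_eq_zero] using (AddGroup.exponent_dvd_sub_iff_zsmul_eq_zsmul.mpr hsmul)

end IntAction

lemma det_one_add_vecMulVec [CommRing R] [DecidableEq n] (u v : n → R) :
    det (1 + vecMulVec u v) = 1 + v ⬝ᵥ u := by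
  rw [vecMulVec_eq (ι := Unit), det_one_add_replicateCol_mul_replicateRow]

lemma one_add_vecMulVec_mulVec_of_dotProduct_eq_zero [Semiring R] [DecidableEq n] (u : n → R)
    {v w : n → R} (hvw : v ⬝ᵥ w = 0) : (1 + vecMulVec u v) *ᵥ w = w := by
  rw [add_mulVec, one_mulVec, vecMulVec_mulVec, hvw]
  simp

end Matrix

lemma map_eq_one_add_vecMulVec_single {n l : ℕ} {k : Fin n → ℤ} {B : Matrix (Fin n) (Fin n) ℤ}
    (hB : ∀ i j : Fin n, B i j =
      if (i : ℕ) = n - 1 then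
        (if (j : ℕ) < l then k j else 0) + (if j = i then 1 else 0)
      else
        (if j = i then 1 else 0))
    {p : Fin n} (hp : (p : ℕ) = n - 1) (R : Type*) [Ring R] :
    B.map (Int.cast : ℤ → R) =
      1 + vecMulVec (Pi.single p 1) (fun j : Fin n => if (j : ℕ) < l then (k j : R) else 0) := by
  ext i j
  have hip : (i : ℕ) = n - 1 ↔ i = p := by rw [← hp, Fin.val_eq_val]
  by_cases hi : i = p <;> by_cases hj : (j : ℕ) < l <;>
    simp [hB, hip, hi, hj, hp, vecMulVec_apply, one_apply, eq_comm (a := j), add_comm]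

theorem last_row_matrix_symmetry_general
    (n : ℕ)
    (a : Fin n → ℝ)
    (l : ℕ) (hl1 : 1 ≤ l) (hln : l ≤ n - 1)
    (k : Fin n → ℤ)
    (hk : ∀ i : Fin n, (i : ℕ) < l → k i ≠ 0)
    (hrel : ∑ i : Fin n, (if (i : ℕ) < l then (k i : ℝ) * a i else 0) = 0)
    (B : Matrix (Fin n) (Fin n) ℤ)
    (hB : ∀ i j : Fin n, B i j =
      if (i : ℕ) = n - 1 then
        (if (j : ℕ) < l then k j else 0) + (if j = i then 1 else 0)
      else
        (if j = i then 1 else 0))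
    (ψ : ℝ → (Fin n → AddCircle (1 : ℝ)) → (Fin n → AddCircle (1 : ℝ)))
    (hψ : ∀ (t : ℝ) (θ : Fin n → AddCircle (1 : ℝ)),
      ψ t θ = fun i => θ i + (↑(t * a i) : AddCircle (1 : ℝ)))
    (R : (Fin n → AddCircle (1 : ℝ)) → (Fin n → AddCircle (1 : ℝ)))
    (hR : ∀ θ : Fin n → AddCircle (1 : ℝ), R θ = fun i => ∑ j : Fin n, B i j • θ j) :
    B.det = 1 ∧
    (B.map (Int.cast : ℤ → ℝ)).mulVec a = a ∧
    (∀ (t : ℝ) (θ : Fin n → AddCircle (1 : ℝ)), R (ψ t θ) = ψ t (R θ)) ∧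
    ¬ ∃ c : Fin n → AddCircle (1 : ℝ), ∀ θ : Fin n → AddCircle (1 : ℝ), R θ = θ + c := by
  set p : Fin n := ⟨n - 1, by omega⟩
  have hB_eq := map_eq_one_add_vecMulVec_single hB (p := p) rfl
  have hR_eq : R = B.intMulVecHom _ := funext hR
  have hBa : B.map Int.cast *ᵥ a = a := by
    rw [hB_eq]
    refine one_add_vecMulVec_mulVec_of_dotProduct_eq_zero _ ?_
    simpa [dotProduct, ite_mul] using hrel
  refine ⟨?_, hBa, fun t θ => ?_, ?_⟩
  · have hp : ¬ (p : ℕ) < l := not_lt.mpr hln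
    exact (congrArg det (hB_eq ℤ)).trans (by simp [det_one_add_vecMulVec, hp])
  · have hψ_eq : ∀ θ, ψ t θ = θ + QuotientAddGroup.mk' _ ∘ (t • a) := fun θ => hψ t θ
    rw [hψ_eq, hψ_eq, hR_eq, intMulVecHom_add_comp_of_mulVec_eq _ (by rw [mulVec_smul, hBa])]
  · rintro ⟨c, hc⟩
    have hc0 : c = 0 := by simpa [hR_eq] using (hc 0).symm
    have hB1 : B = 1 := eq_one_of_forall_intMulVecHom_eq (AddCircle.exponent_eq_zero (1 : ℝ))
      (fun θ => by simpa [hR_eq, hc0] using hc θ)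
    have hentry := congrFun₂ (hB_eq ℤ) p ⟨0, by omega⟩
    simp only [hB1, map_apply, Int.cast_eq, Matrix.add_apply, vecMulVec_apply, Pi.single_eq_same,
      mul_ite, one_mul, mul_zero, left_eq_add, ite_eq_right_iff, p] at hentry
    exact hk ⟨0, by omega⟩ hl1 (hentry hl1)

/-- Suppose the components `a₁, …, aₙ` of the nonzero constant vector field
`X_ψ = a` on `𝕋^n` satisfy `k₁ a₁ + ⋯ + k_l a_l = 0` with `1 ≤ l ≤ n - 1` and all `kᵢ ≠ 0`.
Let `B ∈ GL(n,ℤ)` be the identity matrix with its last row replaced by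
`(k₁, …, k_l, 0, …, 0, 1)`.  Then `det B = 1` (so `B ∈ GL(n,ℤ)`), `B · a = a` (so the induced
toral automorphism `R` satisfies `R_* X_ψ = X_ψ`, i.e. it commutes with the flow), and `R` is
not a translation. -/
theorem last_row_matrix_symmetry
    (n : ℕ) (hn : 2 ≤ n)
    (a : Fin n → ℝ) (ha : a ≠ 0)
    (l : ℕ) (hl1 : 1 ≤ l) (hln : l ≤ n - 1)
    (k : Fin n → ℤ)
    (hk : ∀ i : Fin n, (i : ℕ) < l → k i ≠ 0)
    (hrel : ∑ i : Fin n, (if (i : ℕ) < l then (k i : ℝ) * a i else 0) = 0)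
    (B : Matrix (Fin n) (Fin n) ℤ)
    (hB : ∀ i j : Fin n, B i j =
      if (i : ℕ) = n - 1 then
        (if (j : ℕ) < l then k j else 0) + (if j = i then 1 else 0)
      else
        (if j = i then 1 else 0))
    (ψ : ℝ → (Fin n → AddCircle (1 : ℝ)) → (Fin n → AddCircle (1 : ℝ)))
    (hψ : ∀ (t : ℝ) (θ : Fin n → AddCircle (1 : ℝ)),
      ψ t θ = fun i => θ i + (↑(t * a i) : AddCircle (1 : ℝ)))
    (R : (Fin n → AddCircle (1 : ℝ)) → (Fin n → AddCircle (1 : ℝ)))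
    (hR : ∀ θ : Fin n → AddCircle (1 : ℝ), R θ = fun i => ∑ j : Fin n, B i j • θ j) :
    B.det = 1 ∧
    (B.map (Int.cast : ℤ → ℝ)).mulVec a = a ∧
    (∀ (t : ℝ) (θ : Fin n → AddCircle (1 : ℝ)), R (ψ t θ) = ψ t (R θ)) ∧
    ¬ ∃ c : Fin n → AddCircle (1 : ℝ), ∀ θ : Fin n → AddCircle (1 : ℝ), R θ = θ + c :=
  last_row_matrix_symmetry_general n a l hl1 hln k hk hrel B hB ψ hψ R hR
end
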